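/- arXiv:2205.10022 — 6 statements merged into one kernel-verified Lean document; each statement's English description precedes it below -/
import Mathlib

section
/- No convex margin loss φ: ℝ → ℝ≥0 is consistent with respect to the loss l_≤(x,y,f) = 1_{y·f(x) ≤ 0}: there exists a distribution P on ℝ × {−1,+1} and a sequence (f_n) of measurable functions with R_{φ,P}(f_n) → R*_{φ,P} but R_{l_≤,P}(f_n) does not converge to R*_{l_≤,P}. Specifically, for P = ½δ_{(0,+1)} + ½δ_{(0,−1)}, the sequence f_n ≡ 0 minimizes the φ-risk while R_{l_≤,P}(f_n) = 1 > ½ = R*_{l_≤,P}. -/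
open MeasureTheory Filter

/-- The two-point distribution `½ δ_{(0,1)} + ½ δ_{(0,-1)}` on `ℝ × ℝ`. -/
noncomputable def Ptwo : Measure (ℝ × ℝ) :=
  (1/2 : ENNReal) • Measure.dirac ((0:ℝ), (1:ℝ)) + (1/2 : ENNReal) • Measure.dirac ((0:ℝ), (-1:ℝ))

/-- The φ-risk under `Ptwo`. -/
noncomputable def riskPhi (φ : ℝ → ℝ) (f : ℝ → ℝ) : ℝ := ∫ p, φ (p.2 * f p.1) ∂Ptwo

/-- The risk for the loss `l_≤(x,y,f) = 1_{y f(x) ≤ 0}` under `Ptwo`. -/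
noncomputable def riskLeq (f : ℝ → ℝ) : ℝ :=
  ∫ p, (if p.2 * f p.1 ≤ 0 then (1:ℝ) else 0) ∂Ptwo

lemma integrable_dirac' {α : Type*} [MeasurableSpace α] [MeasurableSingletonClass α]
    (g : α → ℝ) (a : α) : Integrable g (Measure.dirac a) :=
  (integrable_const (g a)).congr (ae_eq_dirac g).symm

lemma integral_Ptwo (g : ℝ × ℝ → ℝ) :
    ∫ p, g p ∂Ptwo = (1/2) * g (0, 1) + (1/2) * g (0, -1) := by
  rw [Ptwo, integral_add_measure, integral_smul_measure, integral_smul_measure,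
    integral_dirac, integral_dirac]
  · norm_num
  · exact ((integrable_dirac' g _).smul_measure (by norm_num))
  · exact ((integrable_dirac' g _).smul_measure (by norm_num))

theorem stmt1 (φ : ℝ → ℝ) (hφ : ConvexOn ℝ Set.univ φ) (hpos : ∀ t, 0 ≤ φ t) :
    riskPhi φ (fun _ => 0) = (⨅ f : {f : ℝ → ℝ // Measurable f}, riskPhi φ f.1) ∧
    riskLeq (fun _ => 0) = 1 ∧
    (⨅ f : {f : ℝ → ℝ // Measurable f}, riskLeq f.1) = 1/2 ∧
    ¬ Tendsto (fun _ : ℕ => riskLeq (fun _ => 0)) atTop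
        (nhds (⨅ f : {f : ℝ → ℝ // Measurable f}, riskLeq f.1)) := by
  have hriskPhi : ∀ f : ℝ → ℝ, riskPhi φ f = (1/2) * φ (f 0) + (1/2) * φ (-(f 0)) := by
    intro f
    rw [riskPhi, integral_Ptwo (fun p => φ (p.2 * f p.1))]
    norm_num
  have hriskLeq : ∀ f : ℝ → ℝ,
      riskLeq f = (1/2) * (if f 0 ≤ 0 then (1:ℝ) else 0)
        + (1/2) * (if -(f 0) ≤ 0 then (1:ℝ) else 0) := by
    intro f
    rw [riskLeq, integral_Ptwo (fun p => if p.2 * f p.1 ≤ 0 then (1:ℝ) else 0)]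
    norm_num
  have hzero : riskLeq (fun _ => 0) = 1 := by
    rw [hriskLeq]; norm_num
  haveI : Nonempty {f : ℝ → ℝ // Measurable f} := ⟨⟨fun _ => 0, measurable_const⟩⟩
  have hIce : (⨅ f : {f : ℝ → ℝ // Measurable f}, riskLeq f.1) = 1/2 := by
    apply le_antisymm
    · have : riskLeq (fun _ => (1:ℝ)) = 1/2 := by rw [hriskLeq]; norm_num
      calc (⨅ f : {f : ℝ → ℝ // Measurable f}, riskLeq f.1)
          ≤ riskLeq (fun _ => (1:ℝ)) :=
            ciInf_le (f := fun f : {f : ℝ → ℝ // Measurable f} => riskLeq f.1)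
                     ⟨0, by rintro x ⟨⟨f, hf⟩, rfl⟩
                            show (0:ℝ) ≤ riskLeq f
                            rw [hriskLeq]
                            positivity⟩ ⟨fun _ => 1, measurable_const⟩
        _ = 1/2 := this
    · apply le_ciInf
      rintro ⟨f, hf⟩
      rw [hriskLeq]
      rcases le_or_gt (f 0) 0 with h | h
      · simp only [if_pos h]
        have : (0:ℝ) ≤ (if -(f 0) ≤ 0 then (1:ℝ) else 0) := by positivity
        linarith
      · have h2 : -(f 0) ≤ 0 := by linarith
        simp only [if_pos h2]
        have : (0:ℝ) ≤ (if f 0 ≤ 0 then (1:ℝ) else 0) := by positivity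
        linarith
  refine ⟨?_, hzero, hIce, ?_⟩
  · apply le_antisymm
    · apply le_ciInf
      rintro ⟨f, hf⟩
      rw [hriskPhi, hriskPhi]
      have := hφ.2 (Set.mem_univ (f 0)) (Set.mem_univ (-(f 0)))
        (by norm_num : (0:ℝ) ≤ 1/2) (by norm_num : (0:ℝ) ≤ 1/2) (by norm_num)
      simp only [smul_eq_mul] at this
      have h0 : (1/2 : ℝ) * f 0 + (1/2) * (-(f 0)) = 0 := by ring
      rw [h0] at this
      norm_num
      linarith
    · have hb : BddBelow (Set.range fun f : {f : ℝ → ℝ // Measurable f} => riskPhi φ f.1) := by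
        refine ⟨0, ?_⟩
        rintro x ⟨⟨f, hf⟩, rfl⟩
        show (0:ℝ) ≤ riskPhi φ f
        rw [hriskPhi]
        have := hpos (f 0); have := hpos (-(f 0)); linarith
      exact ciInf_le hb ⟨fun _ => 0, measurable_const⟩
  · rw [hIce, hzero]
    intro h
    have := tendsto_nhds_unique h (tendsto_const_nhds : Tendsto (fun _ : ℕ => (1:ℝ)) atTop (nhds 1))
    norm_num at this
end

section
/- For any ε > 0 and η ∈ [0,1], the optimal calibration function of the adversarial 0/1 loss l_{0/1,ε}(x,y,f) = sup_{x' ∈ B_ε(x)} 1_{y·sign(f(x')) ≤ 0} equals min(η, 1−η), the same as the optimal calibration function of the standard 0/1 loss. -/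
open MeasureTheory Metric Filter Set

/-- Sign with the convention `sign 0 = 1`. -/
noncomputable def sgn (t : ℝ) : ℝ := if 0 ≤ t then 1 else -1

/-- The 0/1 loss `l_{0/1}(y, t) = 1_{y · sign(t) ≤ 0}` (as a function of the label and of `f x`). -/
noncomputable def l01 : ℝ → ℝ → ℝ := fun y t => if y * sgn t ≤ 0 then 1 else 0

/-- The margin loss associated with `φ`: `(y, t) ↦ φ(y t)`. -/
noncomputable def margin (φ : ℝ → ℝ) : ℝ → ℝ → ℝ := fun y t => φ (y * t)

/-- The adversarial version of a loss `L`: `sup_{x' ∈ B_ε(x)} L(y, f x')`. -/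
noncomputable def advLoss {X : Type*} [MetricSpace X] (L : ℝ → ℝ → ℝ) (ε : ℝ) (x : X)
    (y : ℝ) (f : X → ℝ) : ℝ :=
  ⨆ x' : closedBall x ε, L y (f x')

/-- The calibration function of the adversarial loss:
`C(x, η, f) = η L_ε(x, 1, f) + (1-η) L_ε(x, -1, f)`. -/
noncomputable def advCal {X : Type*} [MetricSpace X] (L : ℝ → ℝ → ℝ) (ε : ℝ) (x : X)
    (η : ℝ) (f : X → ℝ) : ℝ :=
  η * advLoss L ε x 1 f + (1 - η) * advLoss L ε x (-1) f

/-- Optimal adversarial calibration function (infimum over measurable functions). -/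
noncomputable def advCalStar (X : Type*) [MetricSpace X] [MeasurableSpace X]
    (L : ℝ → ℝ → ℝ) (ε : ℝ) (x : X) (η : ℝ) : ℝ :=
  ⨅ f : {f : X → ℝ // Measurable f}, advCal L ε x η f.1

/-- Standard (non-adversarial) calibration function. -/
noncomputable def stdCal {X : Type*} (L : ℝ → ℝ → ℝ) (x : X) (η : ℝ) (f : X → ℝ) : ℝ :=
  η * L 1 (f x) + (1 - η) * L (-1) (f x)

/-- Optimal standard calibration function (infimum over measurable functions). -/
noncomputable def stdCalStar (X : Type*) [MeasurableSpace X] [TopologicalSpace X]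
    (L : ℝ → ℝ → ℝ) (x : X) (η : ℝ) : ℝ :=
  ⨅ f : {f : X → ℝ // Measurable f}, stdCal L x η f.1

/-- Standard risk of `f` for the loss `L` under a distribution `Q` on `X × ℝ`
(labels are the real values `±1`). -/
noncomputable def stdRisk {X : Type*} [MeasurableSpace X] (L : ℝ → ℝ → ℝ)
    (Q : Measure (X × ℝ)) (f : X → ℝ) : ℝ :=
  ∫ p, L p.2 (f p.1) ∂Q

/-- Adversarial risk of `f` at level `ε` for the loss `L` under `P`. -/
noncomputable def advRisk {X : Type*} [MetricSpace X] [MeasurableSpace X] (L : ℝ → ℝ → ℝ)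
    (ε : ℝ) (P : Measure (X × ℝ)) (f : X → ℝ) : ℝ :=
  ∫ p, advLoss L ε p.1 p.2 f ∂P

/-- `φ` is calibrated (w.r.t. the 0/1 loss) in the standard classification setting;
for margin losses this is a pointwise condition on the real line. -/
def StdCalibrated (φ : ℝ → ℝ) : Prop :=
  ∀ ξ > (0:ℝ), ∀ η ∈ Icc (0:ℝ) 1, ∃ δ > (0:ℝ), ∀ α : ℝ,
    η * φ α + (1 - η) * φ (-α) - (⨅ β : ℝ, η * φ β + (1 - η) * φ (-β)) ≤ δ →
    η * l01 1 α + (1 - η) * l01 (-1) α - min η (1 - η) ≤ ξ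

/-- `φ` is uniformly calibrated in the standard classification setting. -/
def StdUnifCalibrated (φ : ℝ → ℝ) : Prop :=
  ∀ ξ > (0:ℝ), ∃ δ > (0:ℝ), ∀ η ∈ Icc (0:ℝ) 1, ∀ α : ℝ,
    η * φ α + (1 - η) * φ (-α) - (⨅ β : ℝ, η * φ β + (1 - η) * φ (-β)) ≤ δ →
    η * l01 1 α + (1 - η) * l01 (-1) α - min η (1 - η) ≤ ξ

/-- `φ` is adversarially calibrated at level `ε`. -/
def AdvCalibrated (X : Type*) [MetricSpace X] [MeasurableSpace X] (φ : ℝ → ℝ) (ε : ℝ) : Prop :=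
  ∀ ξ > (0:ℝ), ∀ η ∈ Icc (0:ℝ) 1, ∀ x : X, ∃ δ > (0:ℝ), ∀ f : X → ℝ, Measurable f →
    advCal (margin φ) ε x η f - advCalStar X (margin φ) ε x η ≤ δ →
    advCal l01 ε x η f - advCalStar X l01 ε x η ≤ ξ

lemma l01_one_eval (t : ℝ) : l01 1 t = if 0 ≤ t then 0 else 1 := by
  unfold l01 sgn; split <;> norm_num

lemma l01_neg_eval (t : ℝ) : l01 (-1) t = if 0 ≤ t then 1 else 0 := by
  unfold l01 sgn; split <;> norm_num

lemma l01_le_one (y t : ℝ) : l01 y t ≤ 1 := by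
  unfold l01; split <;> norm_num

lemma l01_nonneg (y t : ℝ) : 0 ≤ l01 y t := by
  unfold l01; split <;> norm_num

lemma pt_ge (η t : ℝ) (hη : η ∈ Icc (0:ℝ) 1) :
    min η (1 - η) ≤ η * l01 1 t + (1 - η) * l01 (-1) t := by
  rw [l01_one_eval, l01_neg_eval]
  by_cases h : 0 ≤ t <;> simp [h, min_le_iff]

theorem stmt4 {X : Type*} [MetricSpace X] [MeasurableSpace X]
    (ε : ℝ) (hε : 0 < ε) (x : X) (η : ℝ) (hη : η ∈ Icc (0:ℝ) 1) :
    advCalStar X l01 ε x η = min η (1 - η) ∧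
    stdCalStar X l01 x η = min η (1 - η) := by
  obtain ⟨hη0, hη1⟩ := hη
  have h1η : (0:ℝ) ≤ 1 - η := by linarith
  haveI : Nonempty {f : X → ℝ // Measurable f} := ⟨⟨fun _ => 0, measurable_const⟩⟩
  haveI hball : Nonempty (closedBall x ε) := ⟨⟨x, mem_closedBall_self hε.le⟩⟩
  have hbdd : ∀ (y : ℝ) (f : X → ℝ),
      BddAbove (Set.range fun x' : closedBall x ε => l01 y (f x')) :=
    fun y f => ⟨1, by rintro _ ⟨x', rfl⟩; exact l01_le_one _ _⟩
  -- advLoss ≥ value at x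
  have hAdvGe : ∀ (y : ℝ) (f : X → ℝ), l01 y (f x) ≤ advLoss l01 ε x y f := fun y f =>
    le_ciSup (hbdd y f) ⟨x, mem_closedBall_self hε.le⟩
  -- lower bound for each f
  have hlow : ∀ f : X → ℝ, min η (1 - η) ≤ advCal l01 ε x η f := by
    intro f
    have h1 := hAdvGe 1 f
    have h2 := hAdvGe (-1) f
    have := pt_ge η (f x) ⟨hη0, hη1⟩
    unfold advCal
    nlinarith [this]
  have hlowStd : ∀ f : X → ℝ, min η (1 - η) ≤ stdCal l01 x η f := by
    intro f
    have := pt_ge η (f x) ⟨hη0, hη1⟩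
    unfold stdCal; linarith
  -- constant functions
  have hconstAdv : ∀ c : ℝ, advCal l01 ε x η (fun _ => c)
      = η * l01 1 c + (1 - η) * l01 (-1) c := by
    intro c
    unfold advCal advLoss
    rw [ciSup_const, ciSup_const]
  have hconstStd : ∀ c : ℝ, stdCal l01 x η (fun _ => c)
      = η * l01 1 c + (1 - η) * l01 (-1) c := by
    intro c; rfl
  have hc1 : η * l01 1 (1:ℝ) + (1 - η) * l01 (-1) (1:ℝ) = 1 - η := by
    rw [l01_one_eval, l01_neg_eval]; norm_num
  have hc2 : η * l01 1 (-1:ℝ) + (1 - η) * l01 (-1) (-1:ℝ) = η := by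
    rw [l01_one_eval, l01_neg_eval]; norm_num
  have keyA : ∀ g : {f : X → ℝ // Measurable f},
      advCalStar X l01 ε x η ≤ advCal l01 ε x η g.1 := fun g =>
    ciInf_le (f := fun f : {f : X → ℝ // Measurable f} => advCal l01 ε x η f.1)
      ⟨min η (1-η), by rintro _ ⟨f, rfl⟩; exact hlow f.1⟩ g
  have keyS : ∀ g : {f : X → ℝ // Measurable f},
      stdCalStar X l01 x η ≤ stdCal l01 x η g.1 := fun g =>
    ciInf_le (f := fun f : {f : X → ℝ // Measurable f} => stdCal l01 x η f.1)
      ⟨min η (1-η), by rintro _ ⟨f, rfl⟩; exact hlowStd f.1⟩ g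
  constructor
  · apply le_antisymm
    · apply le_min
      · have := keyA ⟨fun _ => (-1:ℝ), measurable_const⟩
        rw [hconstAdv, hc2] at this; exact this
      · have := keyA ⟨fun _ => (1:ℝ), measurable_const⟩
        rw [hconstAdv, hc1] at this; exact this
    · exact le_ciInf fun f => hlow f.1
  · apply le_antisymm
    · apply le_min
      · have := keyS ⟨fun _ => (-1:ℝ), measurable_const⟩
        rw [hconstStd, hc2] at this; exact this
      · have := keyS ⟨fun _ => (1:ℝ), measurable_const⟩
        rw [hconstStd, hc1] at this; exact this
    · exact le_ciInf fun f => hlowStd f.1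
end

section
/- Let φ(α) = λ + ψ(α − τ) be a shifted odd margin loss (λ ≥ 0, τ > 0, ψ continuous decreasing odd, strictly decreasing near 0, ψ ≥ −λ). Then φ is calibrated for standard classification: for every ξ > 0, η ∈ [0,1] with η ≠ ½, there is δ > 0 such that for any α ∈ ℝ, η φ(α) + (1−η) φ(−α) − inf_{t ∈ ℝ}[η φ(t) + (1−η) φ(−t)] ≤ δ implies sign(α) = sign(η − ½). -/
open MeasureTheory Metric Filter Set

private lemma negiInf (F : ℝ → ℝ) : (⨅ t : ℝ, F (-t)) = ⨅ t : ℝ, F t := by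
  have h : Set.range (fun t : ℝ => F (-t)) = Set.range F := by
    ext y
    constructor
    · rintro ⟨t, rfl⟩; exact ⟨-t, rfl⟩
    · rintro ⟨t, rfl⟩; exact ⟨-t, by simp⟩
  simp only [iInf, h]

private lemma helper11 (lam τ : ℝ) (hlam : 0 ≤ lam) (hτ : 0 < τ)
    (ψ : ℝ → ℝ) (hdec : Antitone ψ)
    (hodd : ∀ α, ψ (-α) = -ψ α)
    (hstrict : ∃ ρ > (0:ℝ), StrictAntiOn ψ (Icc (-ρ) ρ))
    (hlb : ∀ α, -lam ≤ ψ α)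
    (η : ℝ) (hη : 1/2 < η) (hη1 : η ≤ 1) :
    ∃ δ > (0:ℝ), ∀ α : ℝ,
      η * (lam + ψ (α - τ)) + (1 - η) * (lam + ψ (-α - τ)) -
        (⨅ t : ℝ, η * (lam + ψ (t - τ)) + (1 - η) * (lam + ψ (-t - τ))) ≤ δ →
      0 < α := by
  have hbdd : BddBelow (Set.range ψ) := ⟨-lam, by rintro y ⟨t, rfl⟩; exact hlb t⟩
  set m := ⨅ t, ψ t with hm
  have hmle : ∀ t, m ≤ ψ t := fun t => ciInf_le hbdd t
  have hψ0 : ψ 0 = 0 := by have := hodd 0; simp only [neg_zero] at this; linarith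
  have hub : ∀ t, ψ t ≤ -m := by
    intro t
    have h1 := hmle (-t)
    rw [hodd] at h1
    linarith
  have hm0 : m < 0 := by
    obtain ⟨ρ, hρ, hsa⟩ := hstrict
    have h1 : ψ ρ < ψ 0 := hsa ⟨by linarith, hρ.le⟩ ⟨by linarith, le_rfl⟩ hρ
    have h2 := hmle ρ
    linarith
  set G : ℝ → ℝ := fun t => η * (lam + ψ (t - τ)) + (1 - η) * (lam + ψ (-t - τ)) with hG
  have hbddG : BddBelow (Set.range G) := by
    refine ⟨lam + m, ?_⟩
    rintro y ⟨t, rfl⟩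
    have h1 := hmle (t - τ)
    have h2 := hmle (-t - τ)
    simp only [hG]
    nlinarith
  set L : ℝ := lam + (2*η - 1) * m with hL
  have hIle : (⨅ t, G t) ≤ L := by
    apply le_of_forall_pos_le_add
    intro ε hε
    obtain ⟨s, hs⟩ : ∃ s, ψ s < m + ε := exists_lt_of_ciInf_lt (by linarith : (⨅ t, ψ t) < m + ε)
    have key : G (s + τ) ≤ L + ε := by
      have e1 : s + τ - τ = s := by ring
      have h2 : ψ (-(s + τ) - τ) ≤ -m := hub _
      simp only [hG, e1]
      nlinarith
    exact le_trans (ciInf_le hbddG (s + τ)) key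
  refine ⟨(2*η - 1) * (-m) / 2, by nlinarith, ?_⟩
  intro α hα
  by_contra hc
  push_neg at hc
  have ha1 : ψ (-τ) ≤ ψ (α - τ) := hdec (by linarith)
  have ha2 : ψ (-α - τ) ≤ ψ (-τ) := hdec (by linarith)
  have ha3 : ψ (-α - τ) = -ψ (α + τ) := by
    have := hodd (α + τ); rw [show -(α + τ) = -α - τ by ring] at this; exact this
  have ha4 : ψ (α + τ) ≤ ψ (α - τ) := hdec (by linarith)
  have hga : L + (2*η - 1) * (-m) ≤ η * (lam + ψ (α - τ)) + (1 - η) * (lam + ψ (-α - τ)) := by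
    have hu : (0:ℝ) ≤ ψ (α - τ) - ψ (-α - τ) := by linarith
    have hv : (0:ℝ) ≤ ψ (α - τ) + ψ (-α - τ) := by rw [ha3]; linarith
    nlinarith [mul_nonneg (by linarith : (0:ℝ) ≤ η - 1/2) hu]
  have : G α = η * (lam + ψ (α - τ)) + (1 - η) * (lam + ψ (-α - τ)) := rfl
  nlinarith

theorem stmt11 (lam τ : ℝ) (hlam : 0 ≤ lam) (hτ : 0 < τ)
    (ψ : ℝ → ℝ) (hcont : Continuous ψ) (hdec : Antitone ψ)
    (hodd : ∀ α, ψ (-α) = -ψ α)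
    (hstrict : ∃ ρ > (0:ℝ), StrictAntiOn ψ (Icc (-ρ) ρ))
    (hlb : ∀ α, -lam ≤ ψ α)
    (φ : ℝ → ℝ) (hφ : ∀ α, φ α = lam + ψ (α - τ)) :
    ∀ ξ > (0:ℝ), ∀ η ∈ Icc (0:ℝ) 1, η ≠ 1/2 → ∃ δ > (0:ℝ), ∀ α : ℝ,
      η * φ α + (1 - η) * φ (-α) - (⨅ t : ℝ, η * φ t + (1 - η) * φ (-t)) ≤ δ →
      sgn α = sgn (η - 1/2) := by
  intro ξ hξ η hη hne
  rcases hne.lt_or_gt with hlt | hgt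
  · -- η < 1/2 : apply helper with 1 - η
    obtain ⟨δ, hδ, hmain⟩ := helper11 lam τ hlam hτ ψ hdec hodd hstrict hlb (1 - η)
      (by linarith) (by linarith [hη.1])
    refine ⟨δ, hδ, fun α hα => ?_⟩
    simp only [hφ] at hα
    have key : 0 < -α := by
      apply hmain (-α)
      have e1 : (⨅ t : ℝ, (1 - η) * (lam + ψ (t - τ)) + (1 - (1 - η)) * (lam + ψ (-t - τ)))
          = ⨅ t : ℝ, η * (lam + ψ (t - τ)) + (1 - η) * (lam + ψ (-t - τ)) := by
        rw [← negiInf (fun t : ℝ => η * (lam + ψ (t - τ)) + (1 - η) * (lam + ψ (-t - τ)))]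
        congr 1
        funext t
        simp only [neg_neg]
        ring
      rw [e1, neg_neg]
      have e2 : (1 - (1 - η)) = η := by ring
      rw [e2]
      linarith
    have h1 : sgn α = -1 := by unfold sgn; rw [if_neg (by push_neg; linarith)]
    have h2 : sgn (η - 1/2) = -1 := by unfold sgn; rw [if_neg (by push_neg; linarith)]
    rw [h1, h2]
  · -- 1/2 < η
    obtain ⟨δ, hδ, hmain⟩ := helper11 lam τ hlam hτ ψ hdec hodd hstrict hlb η hgt hη.2
    refine ⟨δ, hδ, fun α hα => ?_⟩
    simp only [hφ] at hα
    have key : 0 < α := hmain α hα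
    have h1 : sgn α = 1 := by unfold sgn; rw [if_pos key.le]
    have h2 : sgn (η - 1/2) = 1 := by unfold sgn; rw [if_pos (by linarith)]
    rw [h1, h2]
end

section
/- Let Q be a Borel probability distribution on X × {−1,+1} and φ a 0/1-like margin loss (i.e. φ continuous, of the form λ + ψ(· − τ) with ψ decreasing odd strictly decreasing near 0, λ ≥ 0, τ ≥ 0, and with lim_{t→−∞} φ(t) = 1, lim_{t→+∞} φ(t) = 0). Then the optimal standard φ-risk equals the optimal standard 0/1 risk: R*_{φ,Q} = R*_{Q}. -/
open MeasureTheory Metric Filter Set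

/-- Auxiliary: integral of a bounded measurable function against a probability measure
concentrated on `{1, -1}`. -/
lemma twoPointIntegral (ν : MeasureTheory.Measure ℝ) [MeasureTheory.IsProbabilityMeasure ν]
    (hν : ν ({1, -1} : Set ℝ) = 1)
    (g : ℝ → ℝ) (hg : Measurable g) (hb : ∀ y, ‖g y‖ ≤ 1) :
    ∫ y, g y ∂ν = (ν {1}).toReal * g 1 + (ν {-1}).toReal * g (-1) := by
  have hS : MeasurableSet ({1, -1} : Set ℝ) := (measurableSet_singleton _).insert 1
  have hint : Integrable g ν :=
    (integrable_const (1:ℝ)).mono' hg.aestronglyMeasurable (ae_of_all _ hb)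
  have hcompl : ν ({1, -1} : Set ℝ)ᶜ = 0 := by
    rw [measure_compl hS (measure_ne_top _ _), hν, measure_univ, tsub_self]
  have h1 : ∫ y in ({1,-1} : Set ℝ), g y ∂ν + ∫ y in ({1,-1} : Set ℝ)ᶜ, g y ∂ν = ∫ y, g y ∂ν :=
    integral_add_compl hS hint
  have h2 : ∫ y in ({1,-1} : Set ℝ)ᶜ, g y ∂ν = 0 := by
    rw [Measure.restrict_eq_zero.mpr hcompl, integral_zero_measure]
  have h3 : ∫ y in ({1,-1} : Set ℝ), g y ∂ν
      = ∫ y in ({1} : Set ℝ), g y ∂ν + ∫ y in ({-1} : Set ℝ), g y ∂ν := by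
    rw [Set.insert_eq]
    exact setIntegral_union (by norm_num [Set.disjoint_singleton]) (measurableSet_singleton _)
      hint.integrableOn hint.integrableOn
  have h4 : ∀ a : ℝ, ∫ y in ({a} : Set ℝ), g y ∂ν = (ν {a}).toReal * g a := by
    intro a
    rw [Measure.restrict_singleton, integral_smul_measure, integral_dirac, smul_eq_mul]
  rw [← h1, h2, h3, h4, h4, add_zero]

open ProbabilityTheory
theorem stmt14 {X : Type*} [MetricSpace X] [MeasurableSpace X]
    (Q : Measure (X × ℝ)) [IsProbabilityMeasure Q]
    (hlabels : Q {p : X × ℝ | p.2 = 1 ∨ p.2 = -1} = 1)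
    (lam τ : ℝ) (hlam : 0 ≤ lam) (hτ : 0 ≤ τ)
    (ψ : ℝ → ℝ) (hcont : Continuous ψ) (hdec : Antitone ψ)
    (hodd : ∀ α, ψ (-α) = -ψ α)
    (hstrict : ∃ ρ > (0:ℝ), StrictAntiOn ψ (Icc (-ρ) ρ))
    (hlb : ∀ α, -lam ≤ ψ α)
    (φ : ℝ → ℝ) (hφ : ∀ α, φ α = lam + ψ (α - τ))
    (hlim1 : Tendsto φ atBot (nhds 1)) (hlim0 : Tendsto φ atTop (nhds 0)) :
    (⨅ f : {f : X → ℝ // Measurable f}, stdRisk (margin φ) Q f.1) =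
      ⨅ f : {f : X → ℝ // Measurable f}, stdRisk l01 Q f.1 := by
  classical
  haveI : Nonempty {f : X → ℝ // Measurable f} := ⟨⟨fun _ => 0, measurable_const⟩⟩
  -- ## Basic facts about φ
  have hφanti : Antitone φ := by
    intro a b hab
    rw [hφ, hφ]
    exact add_le_add (le_refl lam) (hdec (by linarith))
  have hψeq : ψ = fun s => φ (s + τ) - lam := by
    funext s; rw [hφ]; ring_nf
  have hψtop : Tendsto ψ atTop (nhds (-lam)) := by
    have h1 : Tendsto (fun s => φ (s + τ)) atTop (nhds 0) :=
      hlim0.comp (tendsto_atTop_add_const_right _ τ tendsto_id)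
    rw [hψeq]; simpa using h1.sub_const lam
  have hψbot : Tendsto ψ atBot (nhds (1 - lam)) := by
    have h1 : Tendsto (fun s => φ (s + τ)) atBot (nhds 1) :=
      hlim1.comp (tendsto_atBot_add_const_right _ τ tendsto_id)
    rw [hψeq]; simpa using h1.sub_const lam
  have hlam2 : lam = 1/2 := by
    have h1 : Tendsto (fun s => ψ (-s)) atTop (nhds (1 - lam)) :=
      hψbot.comp tendsto_neg_atTop_atBot
    have h2 : Tendsto (fun s => ψ (-s)) atTop (nhds lam) := by
      have he : (fun s => ψ (-s)) = fun s => -ψ s := by funext s; rw [hodd]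
      rw [he]; simpa using hψtop.neg
    have := tendsto_nhds_unique h1 h2
    linarith
  have hφ0 : ∀ t, 0 ≤ φ t := fun t => hφanti.le_of_tendsto hlim0 t
  have hφ1 : ∀ t, φ t ≤ 1 := fun t => hφanti.ge_of_tendsto hlim1 t
  have hsum : ∀ t, 1 ≤ φ t + φ (-t) := by
    intro t
    have h1 : ψ (t + τ) ≤ ψ (t - τ) := hdec (by linarith)
    have h2 : ψ (-t - τ) = -ψ (t + τ) := by
      rw [show -t - τ = -(t + τ) by ring, hodd]
    rw [hφ t, hφ (-t), h2]
    linarith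
  have hK : ∀ e : ℝ, 0 ≤ e → e ≤ 1 → ∀ t, min e (1 - e) ≤ e * φ t + (1 - e) * φ (-t) := by
    intro e h0 h1 t
    rcases le_total e (1 - e) with h | h
    · rw [min_eq_left h]; nlinarith [hφ0 t, hφ0 (-t), hsum t]
    · rw [min_eq_right h]; nlinarith [hφ0 t, hφ0 (-t), hsum t]
  have hφcont : Continuous φ := by
    have he : φ = fun t => lam + ψ (t - τ) := funext hφ
    rw [he]; exact continuous_const.add (hcont.comp (continuous_id.sub continuous_const))
  -- ## Measurability and integrability
  have hsgn : Measurable sgn := by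
    unfold sgn
    exact Measurable.ite measurableSet_Ici measurable_const measurable_const
  have hl01b : ∀ y t : ℝ, 0 ≤ l01 y t ∧ l01 y t ≤ 1 := by
    intro y t; unfold l01; split <;> norm_num
  have hl01meas : ∀ f : X → ℝ, Measurable f →
      Measurable (fun p : X × ℝ => l01 p.2 (f p.1)) := by
    intro f hf
    unfold l01
    exact Measurable.ite
      (measurableSet_le (measurable_snd.mul (hsgn.comp (hf.comp measurable_fst)))
        measurable_const) measurable_const measurable_const
  have hmφmeas : ∀ f : X → ℝ, Measurable f →
      Measurable (fun p : X × ℝ => margin φ p.2 (f p.1)) := by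
    intro f hf
    unfold margin
    exact hφcont.measurable.comp (measurable_snd.mul (hf.comp measurable_fst))
  have hl01nb : ∀ f : X → ℝ, ∀ p : X × ℝ, ‖l01 p.2 (f p.1)‖ ≤ 1 := by
    intro f p
    rw [Real.norm_eq_abs, abs_le]
    exact ⟨by linarith [(hl01b p.2 (f p.1)).1], (hl01b p.2 (f p.1)).2⟩
  have hmφnb : ∀ f : X → ℝ, ∀ p : X × ℝ, ‖margin φ p.2 (f p.1)‖ ≤ 1 := by
    intro f p
    simp only [margin]
    rw [Real.norm_eq_abs, abs_le]
    exact ⟨by linarith [hφ0 (p.2 * f p.1)], hφ1 (p.2 * f p.1)⟩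
  have hintQ : ∀ g : X × ℝ → ℝ, Measurable g → (∀ p, ‖g p‖ ≤ 1) → Integrable g Q := by
    intro g hg hb
    exact (integrable_const (1:ℝ)).mono' hg.aestronglyMeasurable (ae_of_all _ hb)
  -- nonnegativity of the risks, hence bounded below
  have hbdd01 : BddBelow (Set.range fun f : {f : X → ℝ // Measurable f} => stdRisk l01 Q f.1) := by
    refine ⟨0, ?_⟩
    rintro _ ⟨f, rfl⟩
    exact integral_nonneg fun p => (hl01b p.2 (f.1 p.1)).1
  have hbddφ : BddBelow (Set.range fun f : {f : X → ℝ // Measurable f} =>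
      stdRisk (margin φ) Q f.1) := by
    refine ⟨0, ?_⟩
    rintro _ ⟨f, rfl⟩
    exact integral_nonneg fun p => (by simpa only [margin] using hφ0 (p.2 * f.1 p.1) : (0:ℝ) ≤ margin φ p.2 (f.1 p.1))
  -- ## labels a.e.
  have hSm : MeasurableSet ({1, -1} : Set ℝ) := (measurableSet_singleton _).insert 1
  have hsetEq : {p : X × ℝ | p.2 = 1 ∨ p.2 = -1} = Prod.snd ⁻¹' ({1, -1} : Set ℝ) := by
    ext p; simp [Set.mem_insert_iff]
  have hmeasSet : MeasurableSet {p : X × ℝ | p.2 = 1 ∨ p.2 = -1} := by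
    rw [hsetEq]; exact measurable_snd hSm
  have hae : ∀ᵐ p ∂Q, p.2 = 1 ∨ p.2 = -1 := by
    rw [ae_iff]
    have : {p : X × ℝ | ¬(p.2 = 1 ∨ p.2 = -1)} = {p : X × ℝ | p.2 = 1 ∨ p.2 = -1}ᶜ := rfl
    rw [this, measure_compl hmeasSet (measure_ne_top _ _), hlabels, measure_univ, tsub_self]
  -- ## Step A : inf_φ ≤ inf_01
  have hstepA : ∀ f : X → ℝ, Measurable f → ∀ ε : ℝ, 0 < ε →
      (⨅ g : {g : X → ℝ // Measurable g}, stdRisk (margin φ) Q g.1)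
        ≤ stdRisk l01 Q f + ε := by
    intro f hf ε hε
    obtain ⟨c, hc⟩ := (hlim0.eventually_lt_const hε).exists
    set fc : X → ℝ := fun x => if 0 ≤ f x then c else -c with hfc
    have hfcm : Measurable fc :=
      Measurable.ite (measurableSet_le measurable_const hf) measurable_const measurable_const
    refine le_trans (ciInf_le hbddφ ⟨fc, hfcm⟩) ?_
    have heq : stdRisk l01 Q f + ε = ∫ p, (l01 p.2 (f p.1) + ε) ∂Q := by
      rw [integral_add (hintQ _ (hl01meas f hf) (hl01nb f)) (integrable_const ε),
        integral_const, probReal_univ, one_smul]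
      rfl
    rw [heq]
    apply integral_mono_ae (hintQ _ (hmφmeas fc hfcm) (hmφnb fc))
      ((hintQ _ (hl01meas f hf) (hl01nb f)).add (integrable_const ε))
    filter_upwards [hae] with p hp
    simp only [Pi.add_apply]
    have hl01nn := (hl01b p.2 (f p.1)).1
    rcases hp with h | h <;> by_cases hx : 0 ≤ f p.1
    · -- y = 1, 0 ≤ f x : correct, φ c small
      have : margin φ p.2 (fc p.1) = φ c := by
        simp [margin, hfc, if_pos hx, h]
      rw [this]; linarith [hc.le]
    · -- y = 1, f x < 0 : l01 = 1
      have h1 : margin φ p.2 (fc p.1) = φ (-c) := by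
        simp [margin, hfc, if_neg hx, h]
      have h2 : l01 p.2 (f p.1) = 1 := by
        simp [l01, sgn, if_neg hx, h]
      rw [h1, h2]; linarith [hφ1 (-c)]
    · -- y = -1, 0 ≤ f x : l01 = 1
      have h1 : margin φ p.2 (fc p.1) = φ (-c) := by
        simp [margin, hfc, if_pos hx, h]
      have h2 : l01 p.2 (f p.1) = 1 := by
        simp [l01, sgn, if_pos hx, h]
      rw [h1, h2]; linarith [hφ1 (-c)]
    · -- y = -1, f x < 0 : correct
      have : margin φ p.2 (fc p.1) = φ c := by
        simp [margin, hfc, if_neg hx, h]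
      rw [this]; linarith [hc.le]
  -- ## Disintegration setup
  set μ : Measure X := Q.fst with hμdef
  set κ : ProbabilityTheory.Kernel X ℝ := Q.condKernel with hκdef
  have hdis : μ ⊗ₘ κ = Q := Q.disintegrate κ
  have hκS : ∀ᵐ x ∂μ, κ x ({1, -1} : Set ℝ) = 1 := by
    have hmeasfun : Measurable fun x => κ x ({1, -1} : Set ℝ) :=
      ProbabilityTheory.Kernel.measurable_coe κ hSm
    have hQS : Q (Prod.snd ⁻¹' ({1, -1} : Set ℝ)) = 1 := by rw [← hsetEq]; exact hlabels
    have h1 : ∫⁻ x, κ x ({1, -1} : Set ℝ) ∂μ = 1 := by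
      have h := Measure.compProd_apply (μ := μ) (κ := κ) (measurable_snd hSm)
      rw [hdis, hQS] at h
      have hpre : ∀ a : X, Prod.mk a ⁻¹' (Prod.snd ⁻¹' ({1,-1} : Set ℝ)) = ({1,-1} : Set ℝ) :=
        fun a => rfl
      simp only [hpre] at h
      exact h.symm
    have hle : ∀ x, κ x ({1, -1} : Set ℝ) ≤ 1 := fun x => prob_le_one
    have h0 : ∫⁻ x, (1 - κ x ({1, -1} : Set ℝ)) ∂μ = 0 := by
      rw [lintegral_sub hmeasfun (by rw [h1]; exact ENNReal.one_ne_top) (ae_of_all _ hle),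
        lintegral_one, measure_univ, h1, tsub_self]
    rw [lintegral_eq_zero_iff (f := fun x => 1 - κ x ({1, -1} : Set ℝ)) (measurable_const.sub hmeasfun)] at h0
    filter_upwards [h0] with x hx
    exact le_antisymm (hle x) (tsub_eq_zero_iff_le.mp hx)
  set η : X → ℝ := fun x => (κ x {1}).toReal with hηdef
  have hηmeas : Measurable η :=
    (ProbabilityTheory.Kernel.measurable_coe κ (measurableSet_singleton 1)).ennreal_toReal
  have hηprop : ∀ᵐ x ∂μ, (κ x {-1}).toReal = 1 - η x ∧ 0 ≤ η x ∧ η x ≤ 1 := by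
    filter_upwards [hκS] with x hx
    have hum : κ x ({1, -1} : Set ℝ) = κ x {1} + κ x {-1} := by
      rw [Set.insert_eq]
      exact measure_union (by norm_num [Set.disjoint_singleton]) (measurableSet_singleton _)
    have h1 : (κ x {1}).toReal + (κ x {-1}).toReal = 1 := by
      rw [← ENNReal.toReal_add (measure_ne_top _ _) (measure_ne_top _ _), ← hum, hx,
        ENNReal.toReal_one]
    refine ⟨by simp only [hηdef]; linarith, ENNReal.toReal_nonneg, ?_⟩
    simp only [hηdef]
    have hnn : (0:ℝ) ≤ (κ x {-1}).toReal := ENNReal.toReal_nonneg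
    linarith
  -- double integral representation
  have hdouble : ∀ g : X × ℝ → ℝ, Measurable g → (∀ p, ‖g p‖ ≤ 1) →
      (∫ p, g p ∂Q = ∫ x, ∫ y, g (x, y) ∂κ x ∂μ) ∧
        Integrable (fun x => ∫ y, g (x, y) ∂κ x) μ := by
    intro g hg hb
    have hint : Integrable g (μ ⊗ₘ κ) := by
      rw [hdis]; exact hintQ g hg hb
    exact ⟨by rw [← hdis]; exact Measure.integral_compProd hint, hint.integral_compProd⟩
  -- ## Step B : inf_01 ≤ R_φ(f) for every measurable f
  have hstepB : ∀ f : X → ℝ, Measurable f →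
      (⨅ g : {g : X → ℝ // Measurable g}, stdRisk l01 Q g.1) ≤ stdRisk (margin φ) Q f := by
    intro f hf
    set gb : X → ℝ := fun x => η x - 1/2 with hgbdef
    have hgbm : Measurable gb := hηmeas.sub measurable_const
    have h01 := hdouble (fun p => l01 p.2 (gb p.1)) (hl01meas gb hgbm) (hl01nb gb)
    have hφd := hdouble (fun p => margin φ p.2 (f p.1)) (hmφmeas f hf) (hmφnb f)
    have key : ∫ x, (∫ y, l01 y (gb x) ∂κ x) ∂μ ≤ ∫ x, (∫ y, margin φ y (f x) ∂κ x) ∂μ := by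
      apply integral_mono_ae h01.2 hφd.2
      filter_upwards [hκS, hηprop] with x hx hxe
      obtain ⟨hm1, h0, h1⟩ := hxe
      have hmy1 : Measurable fun y : ℝ => l01 y (gb x) := by
        unfold l01
        exact Measurable.ite
          (measurableSet_le (measurable_id.mul_const _) measurable_const)
          measurable_const measurable_const
      have hby1 : ∀ y : ℝ, ‖l01 y (gb x)‖ ≤ 1 := by
        intro y
        rw [Real.norm_eq_abs, abs_le]
        exact ⟨by linarith [(hl01b y (gb x)).1], (hl01b y (gb x)).2⟩
      have hmy2 : Measurable fun y : ℝ => margin φ y (f x) := by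
        unfold margin
        exact hφcont.measurable.comp (measurable_id.mul_const _)
      have hby2 : ∀ y : ℝ, ‖margin φ y (f x)‖ ≤ 1 := by
        intro y
        simp only [margin]
        rw [Real.norm_eq_abs, abs_le]
        exact ⟨by linarith [hφ0 (y * f x)], hφ1 (y * f x)⟩
      rw [twoPointIntegral (κ x) hx _ hmy1 hby1, twoPointIntegral (κ x) hx _ hmy2 hby2, hm1]
      have hL : η x * l01 1 (gb x) + (1 - η x) * l01 (-1) (gb x) = min (η x) (1 - η x) := by
        by_cases hcge : (0:ℝ) ≤ gb x
        · have hη2 : 1 - η x ≤ η x := by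
            have : (0:ℝ) ≤ η x - 1/2 := hcge
            linarith
          have e1 : l01 1 (gb x) = 0 := by simp [l01, sgn, if_pos hcge]
          have e2 : l01 (-1) (gb x) = 1 := by simp [l01, sgn, if_pos hcge]
          rw [e1, e2, min_eq_right hη2]; ring
        · have hη2 : η x ≤ 1 - η x := by
            have : ¬ (0:ℝ) ≤ η x - 1/2 := hcge
            push_neg at this; linarith
          have e1 : l01 1 (gb x) = 1 := by simp [l01, sgn, if_neg hcge]
          have e2 : l01 (-1) (gb x) = 0 := by simp [l01, sgn, if_neg hcge]
          rw [e1, e2, min_eq_left hη2]; ring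
      rw [hL]
      have : margin φ 1 (f x) = φ (f x) := by simp [margin]
      rw [this]
      have : margin φ (-1) (f x) = φ (-(f x)) := by simp [margin]
      rw [this]
      exact hK (η x) h0 h1 (f x)
    calc (⨅ g : {g : X → ℝ // Measurable g}, stdRisk l01 Q g.1)
        ≤ stdRisk l01 Q gb := ciInf_le hbdd01 ⟨gb, hgbm⟩
      _ = ∫ x, (∫ y, l01 y (gb x) ∂κ x) ∂μ := h01.1
      _ ≤ ∫ x, (∫ y, margin φ y (f x) ∂κ x) ∂μ := key
      _ = stdRisk (margin φ) Q f := hφd.1.symm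
  -- ## conclusion
  apply le_antisymm
  · refine le_ciInf fun f => ?_
    exact le_of_forall_pos_le_add fun ε hε => hstepA f.1 f.2 ε hε
  · exact le_ciInf fun f => hstepB f.1 f.2
end

section
/- For a 0/1-like margin loss φ, for every η ∈ [0,1]: inf_{α ∈ ℝ} [η φ(α) + (1−η) φ(−α)] = min(η, 1−η). -/
open MeasureTheory Metric Filter Set

theorem stmt15 (lam τ : ℝ) (hlam : 0 ≤ lam) (hτ : 0 ≤ τ)
    (ψ : ℝ → ℝ) (hcont : Continuous ψ) (hdec : Antitone ψ)
    (hodd : ∀ α, ψ (-α) = -ψ α)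
    (hstrict : ∃ ρ > (0:ℝ), StrictAntiOn ψ (Icc (-ρ) ρ))
    (hlb : ∀ α, -lam ≤ ψ α)
    (φ : ℝ → ℝ) (hφ : ∀ α, φ α = lam + ψ (α - τ))
    (hlim1 : Tendsto φ atBot (nhds 1)) (hlim0 : Tendsto φ atTop (nhds 0)) :
    ∀ η ∈ Icc (0:ℝ) 1,
      (⨅ α : ℝ, η * φ α + (1 - η) * φ (-α)) = min η (1 - η) := by
  -- limits of ψ
  have hφfun : φ = fun α => lam + ψ (α - τ) := funext hφ
  have hψtop : Tendsto ψ atTop (nhds (-lam)) := by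
    have h1 : Tendsto (fun α => ψ (α - τ)) atTop (nhds (0 - lam)) := by
      have h := hlim0
      rw [hφfun] at h
      have h2 := h.sub_const lam
      simpa using h2
    have h2 : Tendsto (fun α : ℝ => α + τ) atTop atTop :=
      tendsto_atTop_add_const_right _ τ tendsto_id
    have h3 := h1.comp h2
    simpa [Function.comp_def] using h3
  have hψbot : Tendsto ψ atBot (nhds (1 - lam)) := by
    have h1 : Tendsto (fun α => ψ (α - τ)) atBot (nhds (1 - lam)) := by
      have h := hlim1
      rw [hφfun] at h
      have h2 := h.sub_const lam
      simpa using h2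
    have h2 : Tendsto (fun α : ℝ => α + τ) atBot atBot :=
      tendsto_atBot_add_const_right _ τ tendsto_id
    have h3 := h1.comp h2
    simpa [Function.comp_def] using h3
  have hlam2 : lam = 1/2 := by
    have h1 : Tendsto (fun α => ψ (-α)) atTop (nhds (1 - lam)) :=
      hψbot.comp tendsto_neg_atTop_atBot
    have h2 : Tendsto (fun α => -ψ α) atTop (nhds lam) := by simpa using hψtop.neg
    have h3 : (fun α : ℝ => ψ (-α)) = fun α => -ψ α := funext hodd
    rw [h3] at h1
    have := tendsto_nhds_unique h1 h2
    linarith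
  have hφanti : Antitone φ := by
    rw [hφfun]; intro a b hab
    exact add_le_add (le_refl lam) (hdec (by linarith))
  have hφnonneg : ∀ α, 0 ≤ φ α := fun α =>
    le_of_tendsto hlim0 (eventually_atTop.2 ⟨α, fun b hb => hφanti hb⟩)
  have hsum : ∀ α, 1 ≤ φ α + φ (-α) := by
    intro α
    rw [hφ, hφ]
    have hodd' : ψ (-α - τ) = -ψ (α + τ) := by
      have := hodd (α + τ); rw [← this]; ring_nf
    have hmono : ψ (α + τ) ≤ ψ (α - τ) := hdec (by linarith)
    rw [hodd']; linarith
  intro η hη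
  obtain ⟨hη0, hη1⟩ := hη
  have hmin0 : 0 ≤ min η (1 - η) := le_min hη0 (by linarith)
  have hlow : ∀ α, min η (1 - η) ≤ η * φ α + (1 - η) * φ (-α) := by
    intro α
    have h1 := hφnonneg α; have h2 := hφnonneg (-α); have h3 := hsum α
    nlinarith [mul_nonneg (sub_nonneg.2 (min_le_left η (1 - η))) h1,
      mul_nonneg (sub_nonneg.2 (min_le_right η (1 - η))) h2,
      mul_le_mul_of_nonneg_left h3 hmin0]
  have hbdd : BddBelow (Set.range fun α => η * φ α + (1 - η) * φ (-α)) := by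
    refine ⟨min η (1 - η), ?_⟩
    rintro _ ⟨α, rfl⟩
    exact hlow α
  have hle1 : (⨅ α : ℝ, η * φ α + (1 - η) * φ (-α)) ≤ 1 - η := by
    have ht : Tendsto (fun α => η * φ α + (1 - η) * φ (-α)) atTop
        (nhds (η * 0 + (1 - η) * 1)) :=
      (hlim0.const_mul η).add ((hlim1.comp tendsto_neg_atTop_atBot).const_mul (1 - η))
    have ht' : Tendsto (fun α => η * φ α + (1 - η) * φ (-α)) atTop (nhds (1 - η)) := by
      simpa using ht
    exact ge_of_tendsto ht' (Eventually.of_forall fun α => ciInf_le hbdd α)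
  have hle2 : (⨅ α : ℝ, η * φ α + (1 - η) * φ (-α)) ≤ η := by
    have ht : Tendsto (fun α => η * φ α + (1 - η) * φ (-α)) atBot
        (nhds (η * 1 + (1 - η) * 0)) :=
      (hlim1.const_mul η).add ((hlim0.comp tendsto_neg_atBot_atTop).const_mul (1 - η))
    have ht' : Tendsto (fun α => η * φ α + (1 - η) * φ (-α)) atBot (nhds η) := by
      simpa using ht
    exact ge_of_tendsto ht' (Eventually.of_forall fun α => ciInf_le hbdd α)
  exact le_antisymm (le_min hle2 hle1) (le_ciInf hlow)
end

section
/- Let X be a proper Polish metric space satisfying the midpoint property, ε ≥ 0, P a Borel probability distribution on X × {−1,+1}, and φ a 0/1-like margin loss. Then the optimal adversarial φ-risk equals the optimal adversarial 0/1 risk: R*_{φ_ε,P} = R*_{ε,P}. -/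
open MeasureTheory Metric Filter Set

open scoped Classical

lemma measurable_sgn : Measurable sgn := by
  unfold sgn
  exact Measurable.ite (measurableSet_le measurable_const measurable_id) measurable_const
    measurable_const

lemma l01_one (s : ℝ) : l01 1 s = if s < 0 then 1 else 0 := by
  unfold l01 sgn
  by_cases h : 0 ≤ s
  · rw [if_pos h, if_neg (by norm_num), if_neg (not_lt.2 h)]
  · rw [if_neg h, if_pos (by norm_num), if_pos (not_le.1 h)]

lemma l01_neg_one (s : ℝ) : l01 (-1) s = if 0 ≤ s then 1 else 0 := by
  unfold l01 sgn
  by_cases h : 0 ≤ s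
  · rw [if_pos h, if_pos h, if_pos (by norm_num)]
  · rw [if_neg h, if_neg h, if_neg (by norm_num)]

lemma iSup_ite01 {ι : Sort*} [Nonempty ι] (p : ι → Prop) :
    (⨆ i, (if p i then (1:ℝ) else 0)) = if ∃ i, p i then 1 else 0 := by
  by_cases h : ∃ i, p i
  · obtain ⟨i, hi⟩ := h
    rw [if_pos ⟨i, hi⟩]
    refine le_antisymm (ciSup_le fun j => by split <;> norm_num) ?_
    have := le_ciSup (f := fun i => (if p i then (1:ℝ) else 0))
      ⟨1, by rintro _ ⟨j, rfl⟩; dsimp; split <;> norm_num⟩ i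
    simpa [hi] using this
  · rw [if_neg h]
    push_neg at h
    have : ∀ i, (if p i then (1:ℝ) else 0) = 0 := fun i => if_neg (h i)
    simp only [this]
    exact ciSup_const

lemma iSup_affine01 {ι : Sort*} [Nonempty ι] (u : ι → ℝ) (h01 : ∀ i, u i = 0 ∨ u i = 1)
    (c d : ℝ) (hc : 0 ≤ c) : (⨆ i, (c * u i + d)) = c * (⨆ i, u i) + d := by
  by_cases h : ∃ i, u i = 1
  · obtain ⟨i, hi⟩ := h
    have hu1 : ∀ j, u j ≤ 1 := fun j => by rcases h01 j with h | h <;> simp [h]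
    have hsup : (⨆ i, u i) = 1 := le_antisymm (ciSup_le hu1)
      (hi ▸ le_ciSup ⟨1, by rintro _ ⟨j, rfl⟩; exact hu1 j⟩ i)
    rw [hsup]
    refine le_antisymm (ciSup_le fun j => by nlinarith [hu1 j]) ?_
    have := le_ciSup (f := fun i => c * u i + d)
      ⟨c + d, by rintro _ ⟨j, rfl⟩; dsimp; nlinarith [hu1 j]⟩ i
    simpa [hi] using this
  · push_neg at h
    have h0 : ∀ i, u i = 0 := fun i => (h01 i).resolve_right (h i)
    simp only [h0, mul_zero, zero_add, ciSup_const]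

lemma ereal_iInf_rat (e : EReal) :
    (⨅ q : ℚ, (if e < ((q:ℝ):EReal) then ((q:ℝ):EReal) else ⊤)) = e := by
  refine le_antisymm ?_ (le_iInf fun q => by split <;> [exact le_of_lt ‹_›; exact le_top])
  by_contra hlt
  push_neg at hlt
  obtain ⟨q, hq1, hq2⟩ := EReal.exists_rat_btwn_of_lt hlt
  have : (⨅ q : ℚ, (if e < ((q:ℝ):EReal) then ((q:ℝ):EReal) else ⊤)) ≤ ((q:ℝ):EReal) :=
    iInf_le_of_le q (le_of_eq (if_pos hq1))
  exact absurd (this.trans_lt hq2) (lt_irrefl _)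

lemma ereal_iSup_rat {ι : Sort*} [Nonempty ι] (h : ι → ℝ) :
    (⨆ q : ℚ, (if (∃ i, (q:ℝ) ≤ h i) then ((q:ℝ):EReal) else ⊥)) = ⨆ i, ((h i : ℝ):EReal) := by
  refine le_antisymm (iSup_le fun q => ?_) (iSup_le fun i => ?_)
  · split
    · obtain ⟨i, hi⟩ := ‹∃ i, (q:ℝ) ≤ h i›
      exact le_iSup_of_le i (by exact_mod_cast hi)
    · exact bot_le
  · by_contra hlt
    push_neg at hlt
    obtain ⟨q, hq1, hq2⟩ := EReal.exists_rat_btwn_of_lt hlt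
    have hqle : (∃ j, (q:ℝ) ≤ h j) := ⟨i, le_of_lt (by exact_mod_cast hq2)⟩
    have : ((q:ℝ):EReal) ≤ ⨆ q : ℚ, (if (∃ i, (q:ℝ) ≤ h i) then ((q:ℝ):EReal) else ⊥) :=
      le_iSup_of_le q (le_of_eq (if_pos hqle).symm)
    exact absurd (hq1.trans_le this) (lt_irrefl _)

lemma ereal_iInf_neg {ι : Sort*} (h : ι → ℝ) :
    (⨅ i, ((-(h i) : ℝ):EReal)) = -(⨆ i, ((h i : ℝ):EReal)) := by
  simp only [EReal.coe_neg]
  refine le_antisymm ?_ (le_iInf fun i => by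
    rw [EReal.neg_le]; simpa using le_iSup (fun i => ((h i : ℝ):EReal)) i)
  rw [← neg_neg (⨅ i, -((h i : ℝ):EReal)), EReal.neg_le_neg_iff]
  exact iSup_le fun i => EReal.le_neg_of_le_neg (by simpa using iInf_le (fun i => -((h i:ℝ):EReal)) i)

noncomputable def phibar (φ : ℝ → ℝ) : EReal → ℝ :=
  fun e => if e = ⊥ then 1 else if e = ⊤ then 0 else φ e.toReal

lemma phibar_bot (φ : ℝ → ℝ) : phibar φ ⊥ = 1 := by simp [phibar]

lemma phibar_top (φ : ℝ → ℝ) : phibar φ ⊤ = 0 := by simp [phibar]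

lemma phibar_coe (φ : ℝ → ℝ) (r : ℝ) : phibar φ (r : EReal) = φ r := by
  simp [phibar, EReal.coe_ne_bot, EReal.coe_ne_top]

lemma measurable_phibar {φ : ℝ → ℝ} (hcont : Continuous φ) : Measurable (phibar φ) := by
  unfold phibar
  refine Measurable.ite ?_ measurable_const (Measurable.ite ?_ measurable_const
    (hcont.measurable.comp measurable_ereal_toReal))
  · have : {e : EReal | e = ⊥} = {⊥} := by ext e; simp
    rw [this]; exact (isClosed_singleton).measurableSet
  · have : {e : EReal | e = ⊤} = {⊤} := by ext e; simp
    rw [this]; exact (isClosed_singleton).measurableSet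

lemma iSup_phi {φ : ℝ → ℝ} (hmono : Antitone φ) (hcont : Continuous φ)
    (hle1 : ∀ α, φ α ≤ 1) (hbot : Tendsto φ atBot (nhds 1))
    {ι : Sort*} [Nonempty ι] (h : ι → ℝ) :
    (⨆ i, φ (h i)) = phibar φ (⨅ i, ((h i : ℝ) : EReal)) := by
  have hbdd : BddAbove (range fun i => φ (h i)) := ⟨1, by rintro _ ⟨i, rfl⟩; exact hle1 _⟩
  set e := ⨅ i, ((h i : ℝ) : EReal) with he
  have hkey : ∀ s : ℝ, e < (s : EReal) → φ s ≤ ⨆ i, φ (h i) := by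
    intro s hs
    obtain ⟨i, hi⟩ := iInf_lt_iff.1 hs
    exact le_trans (hmono (le_of_lt (by exact_mod_cast hi))) (le_ciSup hbdd i)
  by_cases hb : e = ⊥
  · rw [hb, phibar_bot]
    refine le_antisymm (ciSup_le fun i => hle1 _) ?_
    refine le_of_tendsto hbot (Eventually.of_forall fun s => ?_)
    exact hkey s (hb ▸ EReal.bot_lt_coe s)
  · by_cases ht : e = ⊤
    · exfalso
      have hi : e ≤ ((h (Classical.arbitrary ι) : ℝ) : EReal) := iInf_le _ _
      rw [ht] at hi
      exact absurd (lt_of_le_of_lt hi (EReal.coe_lt_top _)) (lt_irrefl _)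
    · have hre : ((e.toReal : ℝ) : EReal) = e := EReal.coe_toReal ht hb
      rw [← hre, phibar_coe]
      refine le_antisymm (ciSup_le fun i => ?_) ?_
      · refine hmono ?_
        have h2 : ((e.toReal : ℝ) : EReal) ≤ ((h i : ℝ) : EReal) := hre.trans_le (iInf_le _ i)
        exact_mod_cast h2
      · have htt : Tendsto φ (nhdsWithin e.toReal (Ioi e.toReal)) (nhds (φ e.toReal)) :=
          (hcont.tendsto _).mono_left nhdsWithin_le_nhds
        refine le_of_tendsto htt ?_
        filter_upwards [self_mem_nhdsWithin] with s hs
        refine hkey s ?_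
        rw [← hre]
        exact_mod_cast (hs : e.toReal < s)

theorem stmt16 {X : Type*} [MetricSpace X] [ProperSpace X] [CompleteSpace X]
    [SecondCountableTopology X] [MeasurableSpace X] [BorelSpace X]
    (hmid : ∀ x₁ x₂ : X, ∃ x : X,
      dist x x₁ = dist x₁ x₂ / 2 ∧ dist x x₂ = dist x₁ x₂ / 2)
    (ε : ℝ) (hε : 0 ≤ ε)
    (P : Measure (X × ℝ)) [IsProbabilityMeasure P]
    (hlabels : P {p : X × ℝ | p.2 = 1 ∨ p.2 = -1} = 1)
    (lam τ : ℝ) (hlam : 0 ≤ lam) (hτ : 0 ≤ τ)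
    (ψ : ℝ → ℝ) (hcont : Continuous ψ) (hdec : Antitone ψ)
    (hodd : ∀ α, ψ (-α) = -ψ α)
    (hstrict : ∃ ρ > (0:ℝ), StrictAntiOn ψ (Icc (-ρ) ρ))
    (hlb : ∀ α, -lam ≤ ψ α)
    (φ : ℝ → ℝ) (hφ : ∀ α, φ α = lam + ψ (α - τ))
    (hlim1 : Tendsto φ atBot (nhds 1)) (hlim0 : Tendsto φ atTop (nhds 0)) :
    (⨅ f : {f : X → ℝ // Measurable f}, advRisk (margin φ) ε P f.1) =
      ⨅ f : {f : X → ℝ // Measurable f}, advRisk l01 ε P f.1 := by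
  classical
  -- basic facts about φ
  have hφeq : φ = fun α => lam + ψ (α - τ) := funext hφ
  have hφcont : Continuous φ := by
    rw [hφeq]; exact continuous_const.add (hcont.comp (continuous_id.sub continuous_const))
  have hφmono : Antitone φ := by
    rw [hφeq]; exact fun a b hab => by
      simp only [add_le_add_iff_left]; exact hdec (by linarith)
  -- lam = 1/2
  have hψtop : Tendsto ψ atTop (nhds (-lam)) := by
    have h1 : Tendsto (fun α => ψ (α - τ)) atTop (nhds (0 - lam)) := by
      have := hlim0
      rw [hφeq] at this
      simpa using (this.sub_const lam).congr (fun α => by ring_nf)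
    have h2 : Tendsto (fun α : ℝ => α + τ) atTop atTop := tendsto_atTop_add_const_right _ _ tendsto_id
    have h3 := h1.comp h2
    simp only [Function.comp_def, add_sub_cancel_right] at h3
    simpa using h3
  have hψbot : Tendsto ψ atBot (nhds (1 - lam)) := by
    have h1 : Tendsto (fun α => ψ (α - τ)) atBot (nhds (1 - lam)) := by
      have := hlim1
      rw [hφeq] at this
      simpa using (this.sub_const lam).congr (fun α => by ring_nf)
    have h2 : Tendsto (fun α : ℝ => α + τ) atBot atBot := tendsto_atBot_add_const_right _ _ tendsto_id
    have h3 := h1.comp h2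
    simp only [Function.comp_def, add_sub_cancel_right] at h3
    simpa using h3
  have hlam2 : lam = 1/2 := by
    have h1 : Tendsto (fun α => ψ (-α)) atTop (nhds (1 - lam)) :=
      hψbot.comp tendsto_neg_atTop_atBot
    have h2 : Tendsto (fun α => ψ (-α)) atTop (nhds lam) := by
      have := hψtop.neg
      simp only [neg_neg] at this
      exact this.congr fun α => (hodd α).symm
    have := tendsto_nhds_unique h1 h2
    linarith
  have hφ1 : ∀ α, φ α ≤ 1 := fun α => ge_of_tendsto hlim1 (by
    filter_upwards [eventually_le_atBot α] with b hb
    exact hφmono hb)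
  have hφ0 : ∀ α, 0 ≤ φ α := fun α => le_of_tendsto hlim0 (by
    filter_upwards [eventually_ge_atTop α] with b hb
    exact hφmono hb)
  have hkey : ∀ t, 1 - φ t ≤ φ (-t) := by
    intro t
    have h1 : φ t = lam + ψ (t - τ) := hφ t
    have h2 : φ (-t) = lam - ψ (t + τ) := by
      rw [hφ (-t)]
      have : -t - τ = -(t + τ) := by ring
      rw [this, hodd]
      ring
    have h3 : ψ (t + τ) ≤ ψ (t - τ) := hdec (by linarith)
    rw [h1, h2, hlam2]
    linarith
  -- the threshold measure
  set F : StieltjesFunction ℝ :=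
    { toFun := fun t => 1 - φ t
      mono' := fun a b hab => by simp only [sub_le_sub_iff_left]; exact hφmono hab
      right_continuous' := fun x =>
        ((continuous_const.sub hφcont).continuousAt).continuousWithinAt } with hF
  have hFbot : Tendsto F atBot (nhds 0) := by
    have := hlim1.const_sub 1
    simpa using this
  have hFtop : Tendsto F atTop (nhds 1) := by
    have := hlim0.const_sub 1
    simpa using this
  set μ : Measure ℝ := F.measure with hμ
  haveI : IsProbabilityMeasure μ := F.isProbabilityMeasure hFbot hFtop
  have hμIic : ∀ r : ℝ, μ (Iic r) = ENNReal.ofReal (1 - φ r) := by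
    intro r
    rw [hμ, F.measure_Iic hFbot]
    norm_num
    rfl
  have hμIoi : ∀ r : ℝ, μ (Ioi r) = ENNReal.ofReal (φ r) := by
    intro r
    have h1 : Ioi r = (Iic r)ᶜ := by simp
    rw [h1, measure_compl measurableSet_Iic (measure_ne_top μ _), hμIic]
    rw [measure_univ, ← ENNReal.ofReal_one, ← ENNReal.ofReal_sub _ (by linarith [hφ1 r])]
    norm_num
  have hμlt : ∀ e : EReal, μ {t : ℝ | e < ((t : ℝ) : EReal)} = ENNReal.ofReal (phibar φ e) := by
    intro e
    by_cases hb : e = ⊥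
    · have : {t : ℝ | e < ((t : ℝ) : EReal)} = univ := by
        ext t; simp [hb, EReal.bot_lt_coe]
      rw [this, hb, measure_univ, phibar_bot]
      norm_num
    · by_cases ht : e = ⊤
      · have : {t : ℝ | e < ((t : ℝ) : EReal)} = ∅ := by
          ext t
          simp only [ht, mem_setOf_eq, mem_empty_iff_false, iff_false]
          exact not_lt.2 le_top
        rw [this, ht, measure_empty, phibar_top]
        norm_num
      · have hre : ((e.toReal : ℝ) : EReal) = e := EReal.coe_toReal ht hb
        have : {t : ℝ | e < ((t : ℝ) : EReal)} = Ioi e.toReal := by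
          ext t
          rw [mem_setOf_eq, ← hre, mem_Ioi]
          exact EReal.coe_lt_coe_iff
        rw [this, hμIoi, ← hre, phibar_coe]
        rw [EReal.toReal_coe]
  have hμle : ∀ e : EReal, μ {t : ℝ | ((t : ℝ) : EReal) ≤ e} = ENNReal.ofReal (1 - phibar φ e) := by
    intro e
    by_cases hb : e = ⊥
    · have : {t : ℝ | ((t : ℝ) : EReal) ≤ e} = ∅ := by
        ext t; simp [hb]
      rw [this, hb, measure_empty, phibar_bot]
      norm_num
    · by_cases ht : e = ⊤
      · have : {t : ℝ | ((t : ℝ) : EReal) ≤ e} = univ := by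
          ext t; simp [ht]
        rw [this, ht, measure_univ, phibar_top]
        norm_num
      · have hre : ((e.toReal : ℝ) : EReal) = e := EReal.coe_toReal ht hb
        have : {t : ℝ | ((t : ℝ) : EReal) ≤ e} = Iic e.toReal := by
          ext t
          rw [mem_setOf_eq, ← hre, mem_Iic]
          exact EReal.coe_le_coe_iff
        rw [this, hμIic, ← hre, phibar_coe]
        rw [EReal.toReal_coe]
  have hphibar0 : ∀ e, 0 ≤ phibar φ e := by
    intro e
    unfold phibar
    split
    · norm_num
    · split
      · norm_num
      · exact hφ0 _
  have hphibar1 : ∀ e, phibar φ e ≤ 1 := by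
    intro e
    unfold phibar
    split
    · norm_num
    · split
      · norm_num
      · exact hφ1 _
  have hkeybar : ∀ e : EReal, 1 - phibar φ e ≤ phibar φ (-e) := by
    intro e
    by_cases hb : e = ⊥
    · rw [hb, phibar_bot]
      have : -(⊥ : EReal) = ⊤ := by simp
      rw [this, phibar_top]
      norm_num
    · by_cases ht : e = ⊤
      · rw [ht, phibar_top]
        have : -(⊤ : EReal) = ⊥ := by simp
        rw [this, phibar_bot]
        norm_num
      · have hre : ((e.toReal : ℝ) : EReal) = e := EReal.coe_toReal ht hb
        rw [← hre, ← EReal.coe_neg, phibar_coe, phibar_coe]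
        exact hkey _
  -- generic facts about adversarial losses
  have hne : ∀ x : X, Nonempty (closedBall x ε) := fun x =>
    (Metric.nonempty_closedBall.2 hε).to_subtype
  have h01vals : ∀ y s : ℝ, l01 y s = 0 ∨ l01 y s = 1 := by
    intro y s
    unfold l01
    split
    · right; rfl
    · left; rfl
  have h01nonneg : ∀ y s : ℝ, 0 ≤ l01 y s := by
    intro y s
    rcases h01vals y s with h | h <;> rw [h] <;> norm_num
  have h01le1 : ∀ y s : ℝ, l01 y s ≤ 1 := by
    intro y s
    rcases h01vals y s with h | h <;> rw [h] <;> norm_num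
  have hadv01_nonneg : ∀ (g : X → ℝ) (p : X × ℝ), 0 ≤ advLoss l01 ε p.1 p.2 g := fun g p =>
    Real.iSup_nonneg fun x' => h01nonneg _ _
  have hadv01_le1 : ∀ (g : X → ℝ) (p : X × ℝ), advLoss l01 ε p.1 p.2 g ≤ 1 := fun g p => by
    haveI := hne p.1
    exact ciSup_le fun x' => h01le1 _ _
  have hadvφ_nonneg : ∀ (g : X → ℝ) (p : X × ℝ), 0 ≤ advLoss (margin φ) ε p.1 p.2 g :=
    fun g p => Real.iSup_nonneg fun x' => hφ0 _
  have hadvφ_le1 : ∀ (g : X → ℝ) (p : X × ℝ), advLoss (margin φ) ε p.1 p.2 g ≤ 1 := fun g p => by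
    haveI := hne p.1
    exact ciSup_le fun x' => hφ1 _
  have hbdd01 : BddBelow (range fun fs : {f : X → ℝ // Measurable f} => advRisk l01 ε P fs.1) :=
    ⟨0, by rintro _ ⟨fs, rfl⟩; exact integral_nonneg fun p => hadv01_nonneg _ p⟩
  have hbddφ : BddBelow (range fun fs : {f : X → ℝ // Measurable f} =>
      advRisk (margin φ) ε P fs.1) :=
    ⟨0, by rintro _ ⟨fs, rfl⟩; exact integral_nonneg fun p => hadvφ_nonneg _ p⟩
  have hlabmeas : MeasurableSet {p : X × ℝ | p.2 = 1 ∨ p.2 = -1} := by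
    have : {p : X × ℝ | p.2 = 1 ∨ p.2 = -1}
        = Prod.snd ⁻¹' {1} ∪ Prod.snd ⁻¹' {-1} := by
      ext p; simp [mem_preimage]
    rw [this]
    exact ((measurableSet_singleton _).preimage measurable_snd).union
      ((measurableSet_singleton _).preimage measurable_snd)
  have hae_labels : ∀ᵐ p ∂P, p.2 = 1 ∨ p.2 = -1 :=
    (mem_ae_iff_prob_eq_one hlabmeas).2 hlabels
  haveI : Nonempty {f : X → ℝ // Measurable f} := ⟨⟨fun _ => 0, measurable_const⟩⟩
  refine le_antisymm (le_ciInf fun g => ?_) (le_ciInf fun f => ?_)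
  · -- φ-risk inf ≤ 01-adversarial risk of g
    refine le_of_forall_pos_le_add fun ξ hξ => ?_
    set ξ' : ℝ := min ξ (1/4) with hξ'def
    have hξ'pos : 0 < ξ' := lt_min hξ (by norm_num)
    have hξ'le : ξ' ≤ ξ := min_le_left _ _
    have hξ'le4 : ξ' ≤ 1/4 := min_le_right _ _
    -- choose the scale a
    obtain ⟨a₀, ha₀⟩ := eventually_atTop.1 (hlim0.eventually_lt_const hξ'pos)
    obtain ⟨b₀, hb₀⟩ := eventually_atBot.1 (hlim1.eventually_const_lt
      (show 1 - ξ' < 1 by linarith))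
    set a : ℝ := max 0 (max a₀ (-b₀)) with hadef
    have ha0 : 0 ≤ a := le_max_left _ _
    have hφa : φ a ≤ ξ' := le_of_lt (ha₀ a ((le_max_left a₀ (-b₀)).trans (le_max_right _ _)))
    have hφna : 1 - ξ' ≤ φ (-a) := by
      refine le_of_lt (hb₀ (-a) ?_)
      have : -b₀ ≤ a := (le_max_right a₀ (-b₀)).trans (le_max_right _ _)
      linarith
    set c : ℝ := φ (-a) - φ a with hcdef
    have hc0 : 0 < c := by
      have := hφ1 (-a)
      have := hφ0 a
      simp only [hcdef]
      linarith
    have hc1 : c ≤ 1 := by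
      have := hφ1 (-a)
      have := hφ0 a
      simp only [hcdef]
      linarith
    set G : X → ℝ := fun x => a * sgn (g.1 x) with hGdef
    have hGmeas : Measurable G := measurable_const.mul (measurable_sgn.comp g.2)
    set u : X × ℝ → ℝ := fun p => advLoss l01 ε p.1 p.2 g.1 with hudef
    have hGid : ∀ p : X × ℝ, p.2 = 1 ∨ p.2 = -1 →
        advLoss (margin φ) ε p.1 p.2 G = c * u p + φ a := by
      rintro ⟨x, y⟩ hy
      haveI := hne x
      have hterm : ∀ x' : closedBall x ε,
          margin φ y (G x') = c * l01 y (g.1 x') + φ a := by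
        intro x'
        rcases hy with hy | hy <;> subst hy
        · by_cases hgx : 0 ≤ g.1 x'
          · have hs : sgn (g.1 x') = 1 := if_pos hgx
            simp only [margin, hGdef, hs, mul_one, one_mul, l01_one, if_neg (not_lt.2 hgx)]
            ring
          · have hs : sgn (g.1 x') = -1 := if_neg hgx
            simp only [margin, hGdef, hs, one_mul, l01_one, if_pos (not_le.1 hgx)]
            rw [mul_neg_one]
            ring
        · by_cases hgx : 0 ≤ g.1 x'
          · have hs : sgn (g.1 x') = 1 := if_pos hgx
            simp only [margin, hGdef, hs, mul_one, l01_neg_one, if_pos hgx]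
            rw [neg_one_mul]
            ring
          · have hs : sgn (g.1 x') = -1 := if_neg hgx
            simp only [margin, hGdef, hs, l01_neg_one, if_neg hgx]
            rw [mul_neg_one, neg_one_mul, neg_neg]
            ring
      calc advLoss (margin φ) ε x y G = ⨆ x' : closedBall x ε, (c * l01 y (g.1 x') + φ a) := by
            unfold advLoss
            exact iSup_congr hterm
        _ = c * (⨆ x' : closedBall x ε, l01 y (g.1 x')) + φ a :=
            iSup_affine01 _ (fun x' => h01vals _ _) _ _ (le_of_lt hc0)
        _ = c * u (x, y) + φ a := rfl
    have hae_id : (fun p => advLoss (margin φ) ε p.1 p.2 G) =ᵐ[P] fun p => c * u p + φ a :=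
      hae_labels.mono fun p hp => hGid p hp
    have hbound : ∀ p, ‖u p‖ ≤ 1 := fun p => by
      rw [Real.norm_eq_abs, abs_le]
      exact ⟨by linarith [hadv01_nonneg g.1 p], hadv01_le1 g.1 p⟩
    by_cases hAESM : AEStronglyMeasurable u P
    · have huint : Integrable u P :=
        Integrable.mono' (integrable_const 1) hAESM (Eventually.of_forall hbound)
      have hrisk : advRisk (margin φ) ε P G = c * (∫ p, u p ∂P) + φ a := by
        rw [advRisk, integral_congr_ae hae_id,
          integral_add (huint.const_mul c) (integrable_const _), integral_const_mul,
          integral_const]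
        simp [measure_univ]
      refine le_trans (ciInf_le hbddφ ⟨G, hGmeas⟩) ?_
      rw [hrisk]
      have h1 : 0 ≤ ∫ p, u p ∂P := integral_nonneg fun p => hadv01_nonneg g.1 p
      have h2 : advRisk l01 ε P g.1 = ∫ p, u p ∂P := rfl
      rw [h2]
      nlinarith
    · have hnint : ¬ Integrable (fun p => advLoss (margin φ) ε p.1 p.2 G) P := by
        intro hint
        apply hAESM
        have h2 : AEStronglyMeasurable (fun p => c * u p + φ a) P :=
          hint.aestronglyMeasurable.congr hae_id
        have h3 : AEStronglyMeasurable (fun p => ((c * u p + φ a) - φ a) * c⁻¹) P :=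
          (h2.sub aestronglyMeasurable_const).mul_const _
        refine h3.congr (Eventually.of_forall fun p => ?_)
        field_simp
        ring
      refine le_trans (ciInf_le hbddφ ⟨G, hGmeas⟩) ?_
      rw [advRisk, integral_undef hnint]
      have h4 : 0 ≤ advRisk l01 ε P g.1 := integral_nonneg fun p => hadv01_nonneg g.1 p
      linarith
  · -- 01-risk inf ≤ φ-adversarial risk of f
    refine le_of_forall_pos_le_add fun ξ hξ => ?_
    by_contra hcon
    push_neg at hcon
    set R : ℝ := advRisk (margin φ) ε P f.1 with hRdef
    have hRnn : 0 ≤ R := integral_nonneg fun p => hadvφ_nonneg f.1 p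
    set u : ℝ → X × ℝ → ℝ := fun t p => advLoss l01 ε p.1 p.2 (fun x => f.1 x - t) with hudef
    have hmeas_ft : ∀ t : ℝ, Measurable (fun x => f.1 x - t) := fun t => f.2.sub measurable_const
    have hlt : ∀ t : ℝ, R + ξ < ∫ p, u t p ∂P := by
      intro t
      calc R + ξ < ⨅ fs : {f : X → ℝ // Measurable f}, advRisk l01 ε P fs.1 := hcon
        _ ≤ advRisk l01 ε P (fun x => f.1 x - t) := ciInf_le hbdd01 ⟨_, hmeas_ft t⟩
        _ = ∫ p, u t p ∂P := rfl
    have huint : ∀ t : ℝ, Integrable (u t) P := by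
      intro t
      by_contra hni
      have h2 := hlt t
      rw [integral_undef hni] at h2
      linarith
    choose gq hgq_meas hgq_ae using fun q : ℚ => (huint (q : ℝ)).aestronglyMeasurable
    set mt : X → EReal := fun x => ⨅ q : ℚ, (if 1 ≤ gq q (x, 1) then ((q:ℝ):EReal) else ⊤)
      with hmtdef
    set Mt : X → EReal := fun x => ⨆ q : ℚ, (if 1 ≤ gq q (x, -1) then ((q:ℝ):EReal) else ⊥)
      with hMtdef
    have hmt_meas : Measurable mt := by
      refine Measurable.iInf fun q => Measurable.ite ?_ measurable_const measurable_const
      exact measurableSet_le measurable_const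
        ((hgq_meas q).measurable.comp (measurable_id.prodMk measurable_const))
    have hMt_meas : Measurable Mt := by
      refine Measurable.iSup fun q => Measurable.ite ?_ measurable_const measurable_const
      exact measurableSet_le measurable_const
        ((hgq_meas q).measurable.comp (measurable_id.prodMk measurable_const))
    set m : X → EReal := fun x => ⨅ x' : closedBall x ε, ((f.1 x' : ℝ) : EReal) with hmdef
    set M : X → EReal := fun x => ⨆ x' : closedBall x ε, ((f.1 x' : ℝ) : EReal) with hMdef
    have hu1 : ∀ (t : ℝ) (x : X), u t (x, 1) = if m x < ((t:ℝ):EReal) then 1 else 0 := by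
      intro t x
      haveI := hne x
      calc u t (x, 1) = ⨆ x' : closedBall x ε, (if f.1 x' - t < 0 then (1:ℝ) else 0) :=
            iSup_congr fun x' => l01_one _
        _ = if (∃ x' : closedBall x ε, f.1 x' - t < 0) then 1 else 0 := iSup_ite01 _
        _ = if m x < ((t:ℝ):EReal) then 1 else 0 := by
            refine if_congr ?_ rfl rfl
            rw [hmdef, iInf_lt_iff]
            exact exists_congr fun x' => by rw [sub_neg]; exact (EReal.coe_lt_coe_iff).symm
    have hu2 : ∀ (t : ℝ) (x : X),
        u t (x, -1) = if (∃ x' : closedBall x ε, t ≤ f.1 x') then 1 else 0 := by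
      intro t x
      haveI := hne x
      calc u t (x, -1) = ⨆ x' : closedBall x ε, (if 0 ≤ f.1 x' - t then (1:ℝ) else 0) :=
            iSup_congr fun x' => l01_neg_one _
        _ = if (∃ x' : closedBall x ε, 0 ≤ f.1 x' - t) then 1 else 0 := iSup_ite01 _
        _ = if (∃ x' : closedBall x ε, t ≤ f.1 x') then 1 else 0 := by
            refine if_congr (exists_congr fun x' => sub_nonneg) rfl rfl
    have hgood : ∀ᵐ p ∂P, (p.2 = 1 ∨ p.2 = -1) ∧ ∀ q : ℚ, u (q:ℝ) p = gq q p :=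
      hae_labels.and (ae_all_iff.2 fun q => hgq_ae q)
    have hmt_eq : ∀ x : X, (∀ q : ℚ, u (q:ℝ) (x, 1) = gq q (x, 1)) → mt x = m x := by
      intro x hx
      have h1 : ∀ q : ℚ, (if 1 ≤ gq q (x, 1) then ((q:ℝ):EReal) else ⊤)
          = (if m x < (((q:ℝ)):EReal) then ((q:ℝ):EReal) else ⊤) := by
        intro q
        refine if_congr ?_ rfl rfl
        rw [← hx q, hu1]
        constructor
        · intro h
          by_contra hm
          rw [if_neg hm] at h
          linarith
        · intro h
          rw [if_pos h]
      rw [hmtdef]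
      simp only [h1]
      exact ereal_iInf_rat (m x)
    have hMt_eq : ∀ x : X, (∀ q : ℚ, u (q:ℝ) (x, -1) = gq q (x, -1)) → Mt x = M x := by
      intro x hx
      haveI := hne x
      have h1 : ∀ q : ℚ, (if 1 ≤ gq q (x, -1) then ((q:ℝ):EReal) else ⊥)
          = (if (∃ x' : closedBall x ε, (q:ℝ) ≤ f.1 x') then ((q:ℝ):EReal) else ⊥) := by
        intro q
        refine if_congr ?_ rfl rfl
        rw [← hx q, hu2]
        constructor
        · intro h
          by_contra hm
          rw [if_neg hm] at h
          linarith
        · intro h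
          rw [if_pos h]
      rw [hMtdef]
      simp only [h1]
      exact ereal_iSup_rat fun x' : closedBall x ε => f.1 x'
    set W : X × ℝ → ℝ := fun p => if p.2 = 1 then phibar φ (mt p.1) else phibar φ (-(Mt p.1))
      with hWdef
    have hWmeas : Measurable W := by
      refine Measurable.ite ((measurableSet_singleton (1:ℝ)).preimage measurable_snd) ?_ ?_
      · exact (measurable_phibar hφcont).comp (hmt_meas.comp measurable_fst)
      · exact (measurable_phibar hφcont).comp
          ((continuous_neg.measurable).comp (hMt_meas.comp measurable_fst))
    have hW0 : ∀ p, 0 ≤ W p := fun p => by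
      rw [hWdef]
      dsimp only
      split <;> exact hphibar0 _
    have hW1 : ∀ p, W p ≤ 1 := fun p => by
      rw [hWdef]
      dsimp only
      split <;> exact hphibar1 _
    have hWint : Integrable W P :=
      Integrable.mono' (integrable_const 1) hWmeas.aestronglyMeasurable
        (Eventually.of_forall fun p => by
          rw [Real.norm_eq_abs, abs_le]
          exact ⟨by linarith [hW0 p], hW1 p⟩)
    have hΦW : (fun p => advLoss (margin φ) ε p.1 p.2 f.1) =ᵐ[P] W := by
      filter_upwards [hgood] with p hp
      obtain ⟨hy, hq⟩ := hp
      haveI := hne p.1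
      rcases hy with hy | hy
      · have hx : p = (p.1, 1) := by rw [← hy]
        have hmm : mt p.1 = m p.1 := hmt_eq p.1 (fun q => by rw [← hx]; exact hq q)
        have h1 : advLoss (margin φ) ε p.1 p.2 f.1
            = ⨆ x' : closedBall p.1 ε, φ (f.1 x') := by
          rw [hy]
          unfold advLoss margin
          simp only [one_mul]
        rw [h1, iSup_phi hφmono hφcont hφ1 hlim1, hWdef]
        dsimp only
        rw [if_pos hy, hmm]
      · have hx : p = (p.1, -1) := by rw [← hy]
        have hmm : Mt p.1 = M p.1 := hMt_eq p.1 (fun q => by rw [← hx]; exact hq q)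
        have h1 : advLoss (margin φ) ε p.1 p.2 f.1
            = ⨆ x' : closedBall p.1 ε, φ (-(f.1 x')) := by
          rw [hy]
          unfold advLoss margin
          simp only [neg_one_mul]
        have hy1 : p.2 ≠ 1 := by rw [hy]; norm_num
        rw [h1, iSup_phi hφmono hφcont hφ1 hlim1 (fun x' : closedBall p.1 ε => -(f.1 x')),
          ereal_iInf_neg, hWdef]
        dsimp only
        rw [if_neg hy1, hmm, hMdef]
    have hRW : R = ∫ p, W p ∂P := by
      rw [hRdef, advRisk]
      exact integral_congr_ae hΦW
    set E : Set (ℝ × (X × ℝ)) := {q | (q.2.2 = 1 ∧ mt q.2.1 < ((q.1:ℝ):EReal))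
      ∨ (q.2.2 ≠ 1 ∧ ((q.1:ℝ):EReal) ≤ Mt q.2.1)} with hEdef
    have hEmeas : MeasurableSet E := by
      have h1 : MeasurableSet {q : ℝ × (X × ℝ) | q.2.2 = 1} :=
        (measurableSet_singleton (1:ℝ)).preimage (measurable_snd.comp measurable_snd)
      have hcoe : Measurable (fun q : ℝ × (X × ℝ) => ((q.1 : ℝ) : EReal)) :=
        continuous_coe_real_ereal.measurable.comp measurable_fst
      have h2 : MeasurableSet {q : ℝ × (X × ℝ) | mt q.2.1 < ((q.1:ℝ):EReal)} :=
        measurableSet_lt (hmt_meas.comp (measurable_fst.comp measurable_snd)) hcoe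
      have h3 : MeasurableSet {q : ℝ × (X × ℝ) | ((q.1:ℝ):EReal) ≤ Mt q.2.1} :=
        measurableSet_le hcoe (hMt_meas.comp (measurable_fst.comp measurable_snd))
      have hE2 : E = ({q : ℝ × (X × ℝ) | q.2.2 = 1} ∩ {q | mt q.2.1 < ((q.1:ℝ):EReal)})
          ∪ ({q : ℝ × (X × ℝ) | q.2.2 = 1}ᶜ ∩ {q | ((q.1:ℝ):EReal) ≤ Mt q.2.1}) := by
        ext q
        simp only [hEdef, mem_setOf_eq, mem_union, mem_inter_iff, mem_compl_iff]
      rw [hE2]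
      exact (h1.inter h2).union (h1.compl.inter h3)
    have hsec_meas : ∀ t : ℝ, MeasurableSet (Prod.mk t ⁻¹' E) := fun t =>
      hEmeas.preimage measurable_prodMk_left
    have hule : ∀ t : ℝ, u t ≤ᵐ[P] (Prod.mk t ⁻¹' E).indicator (fun _ => (1:ℝ)) := by
      intro t
      filter_upwards [hgood] with p hp
      obtain ⟨hy, hq⟩ := hp
      haveI := hne p.1
      rcases hy with hy | hy
      · have hx : p = (p.1, 1) := by rw [← hy]
        have hmm : mt p.1 = m p.1 := hmt_eq p.1 (fun q => by rw [← hx]; exact hq q)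
        rw [hx, hu1]
        by_cases hmx : m p.1 < ((t:ℝ):EReal)
        · rw [if_pos hmx]
          have hmem : ((p.1, 1) : X × ℝ) ∈ Prod.mk t ⁻¹' E := Or.inl ⟨rfl, hmm ▸ hmx⟩
          rw [Set.indicator_of_mem hmem]
        · rw [if_neg hmx]
          exact Set.indicator_nonneg (fun _ _ => zero_le_one) _
      · have hx : p = (p.1, -1) := by rw [← hy]
        have hmm : Mt p.1 = M p.1 := hMt_eq p.1 (fun q => by rw [← hx]; exact hq q)
        rw [hx, hu2]
        by_cases hex : ∃ x' : closedBall p.1 ε, t ≤ f.1 x'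
        · rw [if_pos hex]
          obtain ⟨x', hx'⟩ := hex
          have hMx : ((t:ℝ):EReal) ≤ Mt p.1 := by
            rw [hmm, hMdef]
            exact le_iSup_of_le x' (by exact_mod_cast hx')
          have hmem : ((p.1, -1) : X × ℝ) ∈ Prod.mk t ⁻¹' E := Or.inr ⟨by norm_num, hMx⟩
          rw [Set.indicator_of_mem hmem]
        · rw [if_neg hex]
          exact Set.indicator_nonneg (fun _ _ => zero_le_one) _
    have hPEt : ∀ t : ℝ, ENNReal.ofReal (R + ξ) ≤ P (Prod.mk t ⁻¹' E) := by
      intro t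
      have h1 : ∫ p, u t p ∂P ≤ ∫ p, (Prod.mk t ⁻¹' E).indicator (fun _ => (1:ℝ)) p ∂P :=
        integral_mono_ae (huint t) ((integrable_const (1:ℝ)).indicator (hsec_meas t)) (hule t)
      rw [integral_indicator_const (1:ℝ) (hsec_meas t), smul_eq_mul, mul_one] at h1
      have h2 : R + ξ ≤ (P (Prod.mk t ⁻¹' E)).toReal := le_trans (le_of_lt (hlt t)) h1
      calc ENNReal.ofReal (R + ξ) ≤ ENNReal.ofReal ((P (Prod.mk t ⁻¹' E)).toReal) :=
            ENNReal.ofReal_le_ofReal h2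
        _ = P (Prod.mk t ⁻¹' E) := ENNReal.ofReal_toReal (measure_ne_top P _)
    have hsec_t : ∀ p : X × ℝ, μ ((fun t => (t, p)) ⁻¹' E) ≤ ENNReal.ofReal (W p) := by
      intro p
      by_cases hy : p.2 = 1
      · have hset : ((fun t => (t, p)) ⁻¹' E) = {t : ℝ | mt p.1 < ((t:ℝ):EReal)} := by
          ext t
          simp only [hEdef, mem_preimage, mem_setOf_eq, hy]
          tauto
        rw [hset, hμlt, hWdef]
        dsimp only
        rw [if_pos hy]
      · have hset : ((fun t => (t, p)) ⁻¹' E) = {t : ℝ | ((t:ℝ):EReal) ≤ Mt p.1} := by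
          ext t
          simp only [hEdef, mem_preimage, mem_setOf_eq, hy]
          tauto
        rw [hset, hμle, hWdef]
        dsimp only
        rw [if_neg hy]
        exact ENNReal.ofReal_le_ofReal (hkeybar _)
    have hchain : ENNReal.ofReal (R + ξ) ≤ ENNReal.ofReal R := by
      calc ENNReal.ofReal (R + ξ) = ∫⁻ _, ENNReal.ofReal (R + ξ) ∂μ := by
            rw [lintegral_const, measure_univ, mul_one]
        _ ≤ ∫⁻ t, P (Prod.mk t ⁻¹' E) ∂μ := lintegral_mono fun t => hPEt t
        _ = (μ.prod P) E := (Measure.prod_apply hEmeas).symm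
        _ = ∫⁻ p, μ ((fun t => (t, p)) ⁻¹' E) ∂P := Measure.prod_apply_symm hEmeas
        _ ≤ ∫⁻ p, ENNReal.ofReal (W p) ∂P := lintegral_mono hsec_t
        _ = ENNReal.ofReal (∫ p, W p ∂P) :=
            (ofReal_integral_eq_lintegral_ofReal hWint (Eventually.of_forall hW0)).symm
        _ = ENNReal.ofReal R := by rw [← hRW]
    have hfin : R + ξ ≤ R := (ENNReal.ofReal_le_ofReal_iff hRnn).1 hchain
    linarith
end
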